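/- arXiv:2510.22062 — 4 statements merged into one kernel-verified Lean document; each statement's English description precedes it below -/
import Mathlib

section
/- Let O be a finite set and R: O × Z^n → ℝ an objective with global sensitivity Δ, i.e., for all o ∈ O and all neighboring datasets D, D' ∈ Z^n (differing in one record), |R(o,D) − R(o,D')| ≤ Δ. For k ≥ 1, let Ŝ_k(D) denote the element of O achieving the k-th smallest value of R(·, D) (with ties broken so that R(Ŝ_1(D),D) ≤ R(Ŝ_2(D),D) ≤ ...). Then for all k and all neighboring datasets D, D': |R(Ŝ_k(D), D) − R(Ŝ_k(D'), D')| ≤ Δ. That is, the k-th order statistic of the objective values has global sensitivity at most Δ. -/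
/-- Two datasets are neighbors if they differ in at most one record. -/
def Neighbor {Z : Type*} {n : ℕ} (D D' : Fin n → Z) : Prop :=
  ∃ i, ∀ j, j ≠ i → D j = D' j

lemma neighbor_symm {Z : Type*} {n : ℕ} {D D' : Fin n → Z} (h : Neighbor D D') :
    Neighbor D' D := by
  obtain ⟨i, hi⟩ := h
  exact ⟨i, fun j hj => (hi j hj).symm⟩

lemma perm_pigeonhole {N : ℕ} (e : Fin N ≃ Fin N) (k : Fin N) :
    ∃ j, j ≤ k ∧ k ≤ e j := by
  by_contra h
  push_neg at h
  have hsub : (Finset.Iic k).image e ⊆ Finset.Iio k := by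
    intro x hx
    simp only [Finset.mem_image, Finset.mem_Iic] at hx
    obtain ⟨j, hj, rfl⟩ := hx
    simpa using h j hj
  have hc := Finset.card_le_card hsub
  rw [Finset.card_image_of_injective _ e.injective] at hc
  simp [Nat.card_Iic, Nat.card_Iio, Fin.card_Iic, Fin.card_Iio] at hc

lemma one_side {Z O : Type*} [Fintype O] {n : ℕ}
    (F : O → (Fin n → Z) → ℝ) (Δ : ℝ)
    (hsens : ∀ (o : O) (D D' : Fin n → Z), Neighbor D D' → |F o D - F o D'| ≤ Δ)
    (Shat : (Fin n → Z) → Fin (Fintype.card O) → O)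
    (hbij : ∀ D, Function.Bijective (Shat D))
    (hmono : ∀ D, Monotone (fun k => F (Shat D k) D))
    (k : Fin (Fintype.card O)) (D D' : Fin n → Z) (hN : Neighbor D D') :
    F (Shat D k) D - F (Shat D' k) D' ≤ Δ := by
  set e : Fin (Fintype.card O) ≃ Fin (Fintype.card O) :=
    (Equiv.ofBijective _ (hbij D)).trans (Equiv.ofBijective _ (hbij D')).symm with he
  obtain ⟨j, hjk, hkj⟩ := perm_pigeonhole e.symm k
  have key : Shat D (e.symm j) = Shat D' j := by
    have h0 : ∀ i, Shat D' (e i) = Shat D i := by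
      intro i
      have : Shat D' (e i) =
          (Equiv.ofBijective _ (hbij D')) ((Equiv.ofBijective _ (hbij D')).symm
            ((Equiv.ofBijective _ (hbij D)) i)) := rfl
      rw [this, Equiv.apply_symm_apply]
      rfl
    have := h0 (e.symm j)
    rw [Equiv.apply_symm_apply] at this
    exact this.symm
  have h1 : F (Shat D k) D ≤ F (Shat D (e.symm j)) D := hmono D hkj
  have h2 : F (Shat D' j) D - F (Shat D' j) D' ≤ Δ :=
    (abs_sub_le_iff.mp (hsens _ D D' hN)).1
  have h3 : F (Shat D' j) D' ≤ F (Shat D' k) D' := hmono D' hjk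
  rw [key] at h1
  linarith

/-- The k-th order statistic of an objective with global sensitivity `Δ` has global
sensitivity at most `Δ`.  Here `Shat D` enumerates the outcomes sorted by increasing
objective value on dataset `D`. -/
theorem stmt2 {Z O : Type*} [Fintype O] {n : ℕ}
    (F : O → (Fin n → Z) → ℝ) (Δ : ℝ)
    (hsens : ∀ (o : O) (D D' : Fin n → Z), Neighbor D D' → |F o D - F o D'| ≤ Δ)
    (Shat : (Fin n → Z) → Fin (Fintype.card O) → O)
    (hbij : ∀ D, Function.Bijective (Shat D))
    (hmono : ∀ D, Monotone (fun k => F (Shat D k) D)) :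
    ∀ (k : Fin (Fintype.card O)) (D D' : Fin n → Z), Neighbor D D' →
      |F (Shat D k) D - F (Shat D' k) D'| ≤ Δ := by
  intro k D D' hN
  rw [abs_sub_le_iff]
  constructor
  · exact one_side F Δ hsens Shat hbij hmono k D D' hN
  · exact one_side F Δ hsens Shat hbij hmono k D' D (neighbor_symm hN)
end

section
/- Let O be a finite outcome set of size N and let f: O → ℝ be a score function with minimizer S₁ and sorted values f(S₁) ≤ f(S₂) ≤ ... ≤ f(S_N). Fix ε, Δ > 0. For an integer R with 2 ≤ R ≤ N, define P_R(S₁) = 1 / (1 + ∑_{i=2}^{R} exp(−ε(f(S_i)−f(S₁))/(2Δ)) + (N − R)·exp(−ε(f(S_R)−f(S₁))/(2Δ))). Then P_R(S₁) is non-decreasing in R: if R₁ < R₂ then P_{R₁}(S₁) ≤ P_{R₂}(S₁). -/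
/-!
Going from `R₁` to `R₂`, the `N - R₁` outcomes that were all given the weight of `S_{R₁}` get
instead the exact weights of `S_{R₁+1}, …, S_{R₂}` and the weight of `S_{R₂}`. Since scores are
sorted, each of these is at most the weight of `S_{R₁}`, so the denominator of `P_R(S₁)` can
only shrink.
-/

open Finset

lemma sum_Ioc_add_mul_le_mul {w : ℕ → ℝ} {N a b : ℕ} (hab : a ≤ b) (hbN : b ≤ N)
    (hw : ∀ i, a ≤ i → i ≤ b → w i ≤ w a) :
    ∑ i ∈ Ioc a b, w i + ((N : ℝ) - b) * w b ≤ ((N : ℝ) - a) * w a := by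
  have hsum : ∑ i ∈ Ioc a b, w i ≤ ((b : ℝ) - a) * w a := by
    have := sum_le_card_nsmul (Ioc a b) w (w a) fun i hi ↦
      hw i (mem_Ioc.1 hi).1.le (mem_Ioc.1 hi).2
    rwa [Nat.card_Ioc, nsmul_eq_mul, Nat.cast_sub hab] at this
  have hlast : ((N : ℝ) - b) * w b ≤ ((N : ℝ) - b) * w a :=
    mul_le_mul_of_nonneg_left (hw b hab le_rfl) (sub_nonneg.2 (Nat.cast_le.2 hbN))
  linarith

lemma sum_Icc_two_add_mul_le {w : ℕ → ℝ} {N a b : ℕ} (ha : 1 ≤ a) (hab : a ≤ b) (hbN : b ≤ N)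
    (hw : ∀ i, a ≤ i → i ≤ b → w i ≤ w a) :
    ∑ i ∈ Icc 2 b, w i + ((N : ℝ) - b) * w b ≤ ∑ i ∈ Icc 2 a, w i + ((N : ℝ) - a) * w a := by
  have hIcc : ∀ n, Icc 2 n = Ioc 1 n := Icc_add_one_left_eq_Ioc 1
  rw [hIcc, hIcc, ← sum_Ioc_consecutive w ha hab, add_assoc]
  exact (add_le_add_iff_left _).2 (sum_Ioc_add_mul_le_mul hab hbN hw)

/-- In the truncated exponential mechanism (top-`R` method), the probability of selecting
the best outcome is non-decreasing in `R`.  Here `f i` is the `i`-th smallest score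
(`1`-based indexing) and
`P R = 1/(1 + ∑_{i=2}^R exp(−ε(f i − f 1)/(2Δ)) + (N−R)·exp(−ε(f R − f 1)/(2Δ)))`. -/
theorem stmt4 (N : ℕ) (f : ℕ → ℝ) (ε Δ : ℝ) (hε : 0 < ε) (hΔ : 0 < Δ)
    (hmono : ∀ i j, 1 ≤ i → i ≤ j → j ≤ N → f i ≤ f j)
    (R₁ R₂ : ℕ) (h2 : 2 ≤ R₁) (h12 : R₁ < R₂) (hN : R₂ ≤ N)
    (P : ℕ → ℝ)
    (hP : ∀ R, P R = 1 / (1 + (∑ i ∈ Finset.Icc 2 R,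
        Real.exp (-(ε * (f i - f 1)) / (2 * Δ)))
      + ((N : ℝ) - R) * Real.exp (-(ε * (f R - f 1)) / (2 * Δ)))) :
    P R₁ ≤ P R₂ := by
  have hR₁ : 1 ≤ R₁ := one_le_two.trans h2
  have hweight : ∀ i, R₁ ≤ i → i ≤ R₂ → Real.exp (-(ε * (f i - f 1)) / (2 * Δ))
      ≤ Real.exp (-(ε * (f R₁ - f 1)) / (2 * Δ)) := fun i hi hi' ↦ by
    have := hmono R₁ i hR₁ hi (hi'.trans hN)
    gcongr
  have hNR₂ : (0 : ℝ) ≤ N - R₂ := sub_nonneg.2 (Nat.cast_le.2 hN)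
  rw [hP, add_assoc, hP, add_assoc]
  apply one_div_le_one_div_of_le (by positivity)
  exact (add_le_add_iff_left 1).2 (sum_Icc_two_add_mul_le hR₁ h12.le hN hweight)
end

section
/- Let X ∈ ℝ^{n×p} and y ∈ ℝ^n with |y_i| ≤ b_y and |X_{ij}| ≤ b_x for all i, j. For a subset S ⊆ [p] with |S| = s and r > 0, define R(S, D) = min over β ∈ ℝ^s with ‖β‖₂² ≤ r² of ‖y − X_S β‖₂². Then for any two datasets D, D' that differ only in one row (x_n, y_n) vs (x_n', y_n'), with all entries satisfying the same bounds, we have R(S, D) − R(S, D') ≤ 2b_y² + 2b_x² r² s. -/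
/-!
For every feasible `β` the residual sums of `D` and `D'` share all terms except the one of the
replaced row, so the objective of `D` at `β` exceeds that of `D'` by at most `(y_n - x_{n,S}ᵀ β)²`.
By `(a - b)² ≤ 2a² + 2b²` and Cauchy–Schwarz, `(x_{n,S}ᵀ β)² ≤ ‖x_{n,S}‖² ‖β‖² ≤ s b_x² r²`, this
residual is at most `2 b_y² + 2 b_x² r² s`; a pointwise bound between the objectives passes to
their infima, so no minimiser is needed.
-/

open Finset

theorem sInf_sub_sInf_le_of_le_add {ι : Type*} {P : ι → Prop} {f g : ι → ℝ} {C : ℝ}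
    (hP : ∃ i, P i) (hf : BddBelow {v | ∃ i, P i ∧ v = f i})
    (hfg : ∀ i, P i → f i ≤ g i + C) :
    sInf {v | ∃ i, P i ∧ v = f i} - sInf {v | ∃ i, P i ∧ v = g i} ≤ C := by
  obtain ⟨i₀, hi₀⟩ := hP
  suffices sInf {v | ∃ i, P i ∧ v = f i} - C ≤ sInf {v | ∃ i, P i ∧ v = g i} by linarith
  refine le_csInf ⟨g i₀, i₀, hi₀, rfl⟩ ?_
  rintro _ ⟨i, hi, rfl⟩
  linarith [csInf_le hf ⟨i, hi, rfl⟩, hfg i hi]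

theorem sum_le_sum_add_of_eq_of_ne {ι : Type*} [Fintype ι] {u v : ι → ℝ} (i₀ : ι)
    (huv : ∀ i, i ≠ i₀ → u i = v i) (hv : 0 ≤ v i₀) :
    ∑ i, u i ≤ ∑ i, v i + u i₀ := by
  have hdiff : ∑ i, (u i - v i) = u i₀ - v i₀ :=
    sum_eq_single i₀ (fun i _ hi => sub_eq_zero.2 (huv i hi)) (by simp)
  rw [sum_sub_distrib] at hdiff
  linarith

theorem sq_sum_mul_le_card_mul {ι : Type*} {S : Finset ι} {x β : ι → ℝ} {b r : ℝ}
    (hx : ∀ j ∈ S, |x j| ≤ b) (hβ : ∑ j ∈ S, β j ^ 2 ≤ r ^ 2) :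
    (∑ j ∈ S, x j * β j) ^ 2 ≤ b ^ 2 * r ^ 2 * S.card := by
  have hx2 : ∑ j ∈ S, x j ^ 2 ≤ S.card * b ^ 2 := by
    simpa using sum_le_card_nsmul S _ _ fun j hj =>
      sq_le_sq' (abs_le.1 (hx j hj)).1 (abs_le.1 (hx j hj)).2
  calc (∑ j ∈ S, x j * β j) ^ 2 ≤ (∑ j ∈ S, x j ^ 2) * ∑ j ∈ S, β j ^ 2 :=
        sum_mul_sq_le_sq_mul_sq S x β
    _ ≤ (S.card * b ^ 2) * r ^ 2 :=
        mul_le_mul hx2 hβ (sum_nonneg fun _ _ => sq_nonneg _) (by positivity)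
    _ = b ^ 2 * r ^ 2 * S.card := by ring

theorem sq_sub_sum_mul_le {ι : Type*} {S : Finset ι} {a : ℝ} {x β : ι → ℝ} {b_x b_y r : ℝ}
    (ha : |a| ≤ b_y) (hx : ∀ j ∈ S, |x j| ≤ b_x) (hβ : ∑ j ∈ S, β j ^ 2 ≤ r ^ 2) :
    (a - ∑ j ∈ S, x j * β j) ^ 2 ≤ 2 * b_y ^ 2 + 2 * b_x ^ 2 * r ^ 2 * S.card := by
  have ha2 : a ^ 2 ≤ b_y ^ 2 := sq_le_sq' (abs_le.1 ha).1 (abs_le.1 ha).2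
  have hfit := sq_sum_mul_le_card_mul hx hβ
  calc (a - ∑ j ∈ S, x j * β j) ^ 2 ≤ 2 * (a ^ 2 + (-∑ j ∈ S, x j * β j) ^ 2) := by
        simpa only [sub_eq_add_neg] using add_sq_le
    _ ≤ 2 * b_y ^ 2 + 2 * b_x ^ 2 * r ^ 2 * S.card := by rw [neg_sq]; linarith

theorem stmt7_general (n p s : ℕ) (b_x b_y r : ℝ)
    (X X' : Fin n → Fin p → ℝ) (y y' : Fin n → ℝ)
    (hby : ∀ i, |y i| ≤ b_y)
    (hbx : ∀ i j, |X i j| ≤ b_x)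
    (hnb : ∃ i₀, ∀ i, i ≠ i₀ → X i = X' i ∧ y i = y' i)
    (S : Finset (Fin p)) (hS : S.card = s) :
    sInf {v : ℝ | ∃ β : Fin p → ℝ, (∑ j ∈ S, (β j) ^ 2 ≤ r ^ 2) ∧
        v = ∑ i, (y i - ∑ j ∈ S, X i j * β j) ^ 2}
    - sInf {v : ℝ | ∃ β : Fin p → ℝ, (∑ j ∈ S, (β j) ^ 2 ≤ r ^ 2) ∧
        v = ∑ i, (y' i - ∑ j ∈ S, X' i j * β j) ^ 2}
    ≤ 2 * b_y ^ 2 + 2 * b_x ^ 2 * r ^ 2 * s := by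
  obtain ⟨i₀, hi₀⟩ := hnb
  refine sInf_sub_sInf_le_of_le_add ⟨0, by simp [sq_nonneg r]⟩
    ⟨0, fun _ ⟨_, _, hv⟩ => hv ▸ sum_nonneg fun _ _ => sq_nonneg _⟩ fun β hβ => ?_
  calc ∑ i, (y i - ∑ j ∈ S, X i j * β j) ^ 2
      ≤ ∑ i, (y' i - ∑ j ∈ S, X' i j * β j) ^ 2 + (y i₀ - ∑ j ∈ S, X i₀ j * β j) ^ 2 :=
        sum_le_sum_add_of_eq_of_ne i₀ (fun i hi => by rw [(hi₀ i hi).1, (hi₀ i hi).2])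
          (sq_nonneg _)
    _ ≤ _ := by
        grw [sq_sub_sum_mul_le (hby i₀) (fun j _ => hbx i₀ j) hβ, hS]

/-- Global sensitivity bound for the constrained least-squares objective:
if `|y_i| ≤ b_y`, `|X_{ij}| ≤ b_x` and the two datasets differ in one row, then
`R(S,D) − R(S,D') ≤ 2 b_y² + 2 b_x² r² s`. -/
theorem stmt7 (n p s : ℕ) (b_x b_y r : ℝ) (hr : 0 < r)
    (X X' : Fin n → Fin p → ℝ) (y y' : Fin n → ℝ)
    (hby : ∀ i, |y i| ≤ b_y) (hby' : ∀ i, |y' i| ≤ b_y)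
    (hbx : ∀ i j, |X i j| ≤ b_x) (hbx' : ∀ i j, |X' i j| ≤ b_x)
    (hnb : ∃ i₀, ∀ i, i ≠ i₀ → X i = X' i ∧ y i = y' i)
    (S : Finset (Fin p)) (hS : S.card = s) :
    sInf {v : ℝ | ∃ β : Fin p → ℝ, (∑ j ∈ S, (β j) ^ 2 ≤ r ^ 2) ∧
        v = ∑ i, (y i - ∑ j ∈ S, X i j * β j) ^ 2}
    - sInf {v : ℝ | ∃ β : Fin p → ℝ, (∑ j ∈ S, (β j) ^ 2 ≤ r ^ 2) ∧
        v = ∑ i, (y' i - ∑ j ∈ S, X' i j * β j) ^ 2}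
    ≤ 2 * b_y ^ 2 + 2 * b_x ^ 2 * r ^ 2 * s :=
  stmt7_general n p s b_x b_y r X X' y y' hby hbx hnb S hS
end

section
/- Let p ≥ 3 and s ≥ 1 be integers with s ≤ p/2, and let ε, Δ, n, τ > 0 satisfy ε n τ ≥ 16 Δ s log p. Consider a partition of the C(p,s) − 1 non-optimal supports into blocks P₁, ..., P_s where |P_t| = C(p−s, t)·C(s, t), and suppose a score function f satisfies f(S̃_t) − f(S*) ≥ (1/2) n t τ for the block minimizer S̃_t of each block P_t. Then ∑_{t=1}^{s} C(p−s, t)·C(s, t)·exp(−ε(f(S̃_t) − f(S*))/(2Δ)) ≤ ∑_{t=1}^{s} p^{−2t} ≤ 2 p^{−2}, and consequently the exponential mechanism over blocks selects S* with probability at least 1/(1 + 2p^{−2}). -/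
/-! Each of the `C(p-s,t)·C(s,t) ≤ p^{2t}` supports with `t` mistakes has weight
`exp(-ε g_t/(2Δ)) ≤ p^{-4t}`, because the score gap grows linearly in `t` and the sample
condition makes `ε n τ/(4Δ) ≥ 4 log p`. The blocks therefore contribute at most `p^{-2t}`, a
geometric series with ratio `p^{-2} ≤ 1/2`, whose sum is at most `2p^{-2}`. -/

open Finset Real

theorem Nat.choose_sub_mul_choose_le_pow (p s t : ℕ) :
    (p - s).choose t * s.choose t ≤ p ^ (2 * t) := by
  have hprod : (p - s) * s ≤ p ^ 2 := by
    rcases le_or_gt s p with hsp | hps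
    · calc (p - s) * s ≤ p * p := Nat.mul_le_mul (Nat.sub_le p s) hsp
        _ = p ^ 2 := (sq p).symm
    · simp [Nat.sub_eq_zero_of_le hps.le]
  calc (p - s).choose t * s.choose t ≤ (p - s) ^ t * s ^ t :=
        Nat.mul_le_mul (Nat.choose_le_pow _ _) (Nat.choose_le_pow _ _)
    _ = ((p - s) * s) ^ t := (mul_pow _ _ _).symm
    _ ≤ (p ^ 2) ^ t := Nat.pow_le_pow_left hprod t
    _ = p ^ (2 * t) := (pow_mul p 2 t).symm

theorem Real.exp_neg_le_inv_pow_of_mul_log_le {x y : ℝ} (hx : 0 < x) (k : ℕ)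
    (h : k * log x ≤ y) : exp (-y) ≤ (x ^ k)⁻¹ := by
  rw [← exp_log (pow_pos hx k), ← exp_neg, exp_le_exp, log_pow]
  linarith

theorem sum_Icc_pow_le_two_mul {r : ℝ} (hr0 : 0 ≤ r) (hr : r ≤ 1 / 2) (s : ℕ) :
    ∑ t ∈ Icc 1 s, r ^ t ≤ 2 * r := by
  rw [← Ico_add_one_right_eq_Icc]
  calc ∑ t ∈ Ico 1 (s + 1), r ^ t ≤ r ^ 1 / (1 - r) :=
        geom_sum_Ico_le_of_lt_one hr0 (by linarith)
    _ ≤ 2 * r := by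
        rw [pow_one, div_le_iff₀ (by linarith)]
        nlinarith

theorem sum_Icc_inv_pow_two_mul_le {x : ℝ} (hx : 2 ≤ x ^ 2) (s : ℕ) :
    ∑ t ∈ Icc 1 s, (x ^ (2 * t))⁻¹ ≤ 2 / x ^ 2 := by
  have hr : (x ^ 2)⁻¹ ≤ 1 / 2 := by
    rw [one_div]
    exact inv_anti₀ two_pos hx
  simp_rw [pow_mul, ← inv_pow]
  simpa [div_eq_mul_inv] using sum_Icc_pow_le_two_mul (by positivity) hr s

theorem four_mul_le_exponent_of_score_gap {ε Δ n τ L G : ℝ} {s t : ℕ}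
    (hε : 0 ≤ ε) (hΔ : 0 < Δ) (hL : 0 ≤ L) (hcond : 16 * Δ * s * L ≤ ε * n * τ)
    (ht : 1 ≤ t) (hts : t ≤ s) (hG : 1 / 2 * n * t * τ ≤ G) :
    4 * t * L ≤ ε * G / (2 * Δ) := by
  have hs : (1 : ℝ) ≤ s := by exact_mod_cast ht.trans hts
  have hDtL : 0 ≤ Δ * t * L := by positivity
  rw [le_div_iff₀ (by positivity)]
  calc 4 * t * L * (2 * Δ) ≤ 16 * Δ * s * L * (t / 2) := by nlinarith
    _ ≤ ε * n * τ * (t / 2) := by gcongr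
    _ = ε * (1 / 2 * n * t * τ) := by ring
    _ ≤ ε * G := by gcongr

theorem choose_mul_choose_mul_exp_le {p s t : ℕ} (hp : 0 < p) {x : ℝ}
    (hx : 4 * t * log p ≤ x) :
    ((p - s).choose t : ℝ) * s.choose t * exp (-x) ≤ ((p : ℝ) ^ (2 * t))⁻¹ := by
  have hp' : (0 : ℝ) < p := by exact_mod_cast hp
  have hcount : ((p - s).choose t : ℝ) * s.choose t ≤ (p : ℝ) ^ (2 * t) := by
    exact_mod_cast Nat.choose_sub_mul_choose_le_pow p s t
  have hweight : exp (-x) ≤ ((p : ℝ) ^ (4 * t))⁻¹ :=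
    exp_neg_le_inv_pow_of_mul_log_le hp' _ (by push_cast; linarith)
  calc ((p - s).choose t : ℝ) * s.choose t * exp (-x)
      ≤ (p : ℝ) ^ (2 * t) * ((p : ℝ) ^ (4 * t))⁻¹ := by gcongr
    _ = ((p : ℝ) ^ (2 * t))⁻¹ := by
        rw [show 4 * t = 2 * t + 2 * t by ring, pow_add]
        field_simp

theorem stmt12_general (p s : ℕ) (hp : 3 ≤ p)
    (ε Δ n τ : ℝ) (hε : 0 < ε) (hΔ : 0 < Δ)
    (hcond : 16 * Δ * s * Real.log p ≤ ε * n * τ)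
    (g : ℕ → ℝ) (hg : ∀ t, 1 ≤ t → t ≤ s → (1 / 2) * n * (t : ℝ) * τ ≤ g t) :
    (∑ t ∈ Finset.Icc 1 s, ((p - s).choose t : ℝ) * (s.choose t : ℝ) *
        Real.exp (-(ε * g t) / (2 * Δ))
      ≤ ∑ t ∈ Finset.Icc 1 s, ((p : ℝ) ^ (2 * t))⁻¹) ∧
    (∑ t ∈ Finset.Icc 1 s, ((p : ℝ) ^ (2 * t))⁻¹ ≤ 2 / (p : ℝ) ^ 2) ∧
    (1 / (1 + 2 / (p : ℝ) ^ 2)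
      ≤ 1 / (1 + ∑ t ∈ Finset.Icc 1 s, ((p - s).choose t : ℝ) * (s.choose t : ℝ) *
          Real.exp (-(ε * g t) / (2 * Δ)))) := by
  have hp3 : (3 : ℝ) ≤ p := by exact_mod_cast hp
  have hlog : 0 ≤ log p := log_nonneg (by linarith)
  have hblocks : ∑ t ∈ Icc 1 s, ((p - s).choose t : ℝ) * s.choose t * exp (-(ε * g t) / (2 * Δ))
      ≤ ∑ t ∈ Icc 1 s, ((p : ℝ) ^ (2 * t))⁻¹ := by
    refine sum_le_sum fun t ht => ?_
    obtain ⟨ht1, hts⟩ := mem_Icc.mp ht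
    rw [neg_div]
    exact choose_mul_choose_mul_exp_le (by omega)
      (four_mul_le_exponent_of_score_gap hε.le hΔ hlog hcond ht1 hts (hg t ht1 hts))
  have hgeom := sum_Icc_inv_pow_two_mul_le (x := (p : ℝ)) (by nlinarith) s
  have hnonneg : 0 ≤ ∑ t ∈ Icc 1 s,
      ((p - s).choose t : ℝ) * s.choose t * exp (-(ε * g t) / (2 * Δ)) := by positivity
  exact ⟨hblocks, hgeom, one_div_le_one_div_of_le (by linarith) (by linarith)⟩

/-- Block-wise bound for the mistakes method: if `ε n τ ≥ 16 Δ s log p` and the block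
minimizers satisfy `f(S̃_t) − f(S*) ≥ (1/2) n t τ` (here `g t = f(S̃_t) − f(S*)`), then
`∑_{t=1}^s C(p−s,t)·C(s,t)·exp(−ε g_t/(2Δ)) ≤ ∑_{t=1}^s p^{−2t} ≤ 2p^{−2}`, and the
exponential mechanism over blocks selects `S*` with probability at least `1/(1+2p^{−2})`. -/
theorem stmt12 (p s : ℕ) (hp : 3 ≤ p) (hs : 1 ≤ s) (hsp : 2 * s ≤ p)
    (ε Δ n τ : ℝ) (hε : 0 < ε) (hΔ : 0 < Δ) (hn : 0 < n) (hτ : 0 < τ)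
    (hcond : 16 * Δ * s * Real.log p ≤ ε * n * τ)
    (g : ℕ → ℝ) (hg : ∀ t, 1 ≤ t → t ≤ s → (1 / 2) * n * (t : ℝ) * τ ≤ g t) :
    (∑ t ∈ Finset.Icc 1 s, ((p - s).choose t : ℝ) * (s.choose t : ℝ) *
        Real.exp (-(ε * g t) / (2 * Δ))
      ≤ ∑ t ∈ Finset.Icc 1 s, ((p : ℝ) ^ (2 * t))⁻¹) ∧
    (∑ t ∈ Finset.Icc 1 s, ((p : ℝ) ^ (2 * t))⁻¹ ≤ 2 / (p : ℝ) ^ 2) ∧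
    (1 / (1 + 2 / (p : ℝ) ^ 2)
      ≤ 1 / (1 + ∑ t ∈ Finset.Icc 1 s, ((p - s).choose t : ℝ) * (s.choose t : ℝ) *
          Real.exp (-(ε * g t) / (2 * Δ)))) :=
  stmt12_general p s hp ε Δ n τ hε hΔ hcond g hg
end
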